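/- Any set of pairwise unbiased real weighing matrices of order 7 and weight 4 has at most 8 elements. -/
import Mathlib

open Matrix

def IsRealWeighing {n : ℕ} (w : ℕ) (W : Matrix (Fin n) (Fin n) ℝ) : Prop :=
  (∀ i j, W i j = 0 ∨ W i j = 1 ∨ W i j = -1) ∧ W * Wᵀ = (w : ℝ) • 1

def RealUnbiased {n : ℕ} (w : ℕ) (H K : Matrix (Fin n) (Fin n) ℝ) : Prop :=
  ∃ L, IsRealWeighing w L ∧ H * Kᵀ = Real.sqrt w • L

namespace Stmt16Aux

abbrev F4 := Fin 7 × Fin 7 × Fin 7 × Fin 7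

noncomputable def dd (a b : Fin 7) : ℝ := if a = b then 1 else 0

noncomputable def PP (t : F4) : ℝ :=
  2 * (dd t.1 t.2.1 * dd t.2.2.1 t.2.2.2 + dd t.1 t.2.2.1 * dd t.2.1 t.2.2.2
      + dd t.1 t.2.2.2 * dd t.2.1 t.2.2.1)
  - 2 * (dd t.1 t.2.1 * dd t.1 t.2.2.1 * dd t.1 t.2.2.2)

noncomputable def MM (A : Matrix (Fin 7) (Fin 7) ℝ) (t : F4) : ℝ :=
  ∑ a, A a t.1 * A a t.2.1 * (A a t.2.2.1 * A a t.2.2.2)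

lemma expand4 (g : Fin 7 → Fin 7 → Fin 7 → Fin 7 → ℝ) :
    ∑ t : F4, g t.1 t.2.1 t.2.2.1 t.2.2.2 = ∑ k, ∑ l, ∑ p, ∑ q, g k l p q := by
  simp [Fintype.sum_prod_type]

lemma prod_sum (f : Fin 7 → ℝ) :
    ∑ t : F4, f t.1 * f t.2.1 * (f t.2.2.1 * f t.2.2.2) = (∑ k, f k)^4 := by
  rw [expand4 (fun k l p q => f k * f l * (f p * f q))]
  rw [show (∑ k, f k)^4 = ((∑ k, f k) * (∑ l, f l)) * ((∑ p, f p) * (∑ q, f q)) by ring]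
  simp only [Finset.sum_mul, Finset.mul_sum]
  apply Finset.sum_congr rfl; intro k _
  apply Finset.sum_congr rfl; intro l _
  apply Finset.sum_congr rfl; intro p _
  apply Finset.sum_congr rfl; intro q _
  ring

lemma swap3 {ι κ : Type*} [Fintype ι] [Fintype κ] (f : F4 → ι → κ → ℝ) :
    ∑ t : F4, ∑ i, ∑ j, f t i j = ∑ i, ∑ j, ∑ t : F4, f t i j := by
  rw [Finset.sum_comm]
  exact Finset.sum_congr rfl (fun i _ => Finset.sum_comm)

lemma ite_ite (c : Prop) [Decidable c] : (if c then (if c then (1:ℝ) else 0) else 0) = if c then 1 else 0 := by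
  split <;> simp

lemma swap2 (f : Fin 7 → Fin 7 → Fin 7 → ℝ) :
    ∑ k, ∑ p, ∑ a, f k p a = ∑ a, ∑ k, ∑ p, f k p a := by
  calc ∑ k, ∑ p, ∑ a, f k p a = ∑ k, ∑ a, ∑ p, f k p a :=
        Finset.sum_congr rfl (fun k _ => Finset.sum_comm)
    _ = ∑ a, ∑ k, ∑ p, f k p a := Finset.sum_comm

lemma inner_MM (A B : Matrix (Fin 7) (Fin 7) ℝ) :
    ∑ t : F4, MM A t * MM B t = ∑ a, ∑ b, ((A * Bᵀ) a b)^4 := by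
  unfold MM
  simp only [Finset.sum_mul_sum]
  rw [swap3]
  apply Finset.sum_congr rfl; intro a _
  apply Finset.sum_congr rfl; intro b _
  have h1 : (A * Bᵀ) a b = ∑ k, A a k * B b k := by
    simp [Matrix.mul_apply]
  rw [h1, ← prod_sum (fun k => A a k * B b k)]
  apply Finset.sum_congr rfl; intro t _
  ring

lemma collapse1 (X : F4 → ℝ) :
    ∑ t : F4, X t * (dd t.1 t.2.1 * dd t.2.2.1 t.2.2.2) = ∑ k, ∑ p, X (k,k,p,p) := by
  have e := expand4 (fun k l p q => X (k,l,p,q) * (dd k l * dd p q))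
  rw [(by exact e : ∑ t : F4, X t * (dd t.1 t.2.1 * dd t.2.2.1 t.2.2.2) = _)]
  simp [dd, mul_ite, ite_mul, Finset.sum_ite_eq, Finset.sum_ite_eq']

lemma collapse2 (X : F4 → ℝ) :
    ∑ t : F4, X t * (dd t.1 t.2.2.1 * dd t.2.1 t.2.2.2) = ∑ k, ∑ l, X (k,l,k,l) := by
  have e := expand4 (fun k l p q => X (k,l,p,q) * (dd k p * dd l q))
  rw [(by exact e : ∑ t : F4, X t * (dd t.1 t.2.2.1 * dd t.2.1 t.2.2.2) = _)]
  simp [dd, mul_ite, ite_mul, Finset.sum_ite_eq, Finset.sum_ite_eq']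

lemma collapse3 (X : F4 → ℝ) :
    ∑ t : F4, X t * (dd t.1 t.2.2.2 * dd t.2.1 t.2.2.1) = ∑ k, ∑ l, X (k,l,l,k) := by
  have e := expand4 (fun k l p q => X (k,l,p,q) * (dd k q * dd l p))
  rw [(by exact e : ∑ t : F4, X t * (dd t.1 t.2.2.2 * dd t.2.1 t.2.2.1) = _)]
  simp [dd, mul_ite, ite_mul, Finset.sum_ite_eq, Finset.sum_ite_eq']

lemma collapse4 (X : F4 → ℝ) :
    ∑ t : F4, X t * (dd t.1 t.2.1 * dd t.1 t.2.2.1 * dd t.1 t.2.2.2) = ∑ k, X (k,k,k,k) := by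
  have e := expand4 (fun k l p q => X (k,l,p,q) * (dd k l * dd k p * dd k q))
  rw [(by exact e : ∑ t : F4, X t * (dd t.1 t.2.1 * dd t.1 t.2.2.1 * dd t.1 t.2.2.2) = _)]
  simp [dd, mul_ite, ite_mul, Finset.sum_ite_eq, Finset.sum_ite_eq']

lemma inner_PP (X : F4 → ℝ) :
    ∑ t : F4, X t * PP t
      = 2 * ((∑ k, ∑ p, X (k,k,p,p)) + (∑ k, ∑ l, X (k,l,k,l)) + (∑ k, ∑ l, X (k,l,l,k)))
        - 2 * (∑ k, X (k,k,k,k)) := by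
  have h : ∀ t : F4, X t * PP t
      = (2:ℝ) * (X t * (dd t.1 t.2.1 * dd t.2.2.1 t.2.2.2)
          + X t * (dd t.1 t.2.2.1 * dd t.2.1 t.2.2.2)
          + X t * (dd t.1 t.2.2.2 * dd t.2.1 t.2.2.1))
        - 2 * (X t * (dd t.1 t.2.1 * dd t.1 t.2.2.1 * dd t.1 t.2.2.2)) := by
    intro t; unfold PP; ring
  simp only [h]
  rw [Finset.sum_sub_distrib, ← Finset.mul_sum, ← Finset.mul_sum,
    Finset.sum_add_distrib, Finset.sum_add_distrib,
    collapse1, collapse2, collapse3, collapse4]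

/-- pattern sums for PP itself -/
lemma PP_pat1 : ∑ k, ∑ p, PP (k,k,p,p) = 112 := by
  simp [PP, dd, Finset.sum_ite_eq, mul_ite, ite_mul, Finset.sum_add_distrib,
    Finset.sum_sub_distrib, ite_ite, eq_comm]
  norm_num [mul_add, add_mul, Finset.sum_add_distrib, Finset.sum_ite_eq,
    Finset.sum_ite_eq', ite_ite, Finset.sum_const, Finset.card_univ]

lemma PP_pat2 : ∑ k, ∑ l, PP (k,l,k,l) = 112 := by
  simp [PP, dd, Finset.sum_ite_eq, mul_ite, ite_mul, Finset.sum_add_distrib,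
    Finset.sum_sub_distrib, ite_ite, eq_comm]
  norm_num [mul_add, add_mul, Finset.sum_add_distrib, Finset.sum_ite_eq,
    Finset.sum_ite_eq', ite_ite, Finset.sum_const, Finset.card_univ]

lemma PP_pat3 : ∑ k, ∑ l, PP (k,l,l,k) = 112 := by
  simp [PP, dd, Finset.sum_ite_eq, mul_ite, ite_mul, Finset.sum_add_distrib,
    Finset.sum_sub_distrib, ite_ite, eq_comm]
  norm_num [mul_add, add_mul, Finset.sum_add_distrib, Finset.sum_ite_eq,
    Finset.sum_ite_eq', ite_ite, Finset.sum_const, Finset.card_univ]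

lemma PP_pat4 : ∑ k, PP (k,k,k,k) = 28 := by
  simp [PP, dd]
  norm_num

lemma inner_PP_PP : ∑ t : F4, PP t * PP t = 616 := by
  rw [inner_PP PP, PP_pat1, PP_pat2, PP_pat3, PP_pat4]
  norm_num

section
variable {A : Matrix (Fin 7) (Fin 7) ℝ}

lemma row_norm (hA : A * Aᵀ = (4:ℝ) • 1) (a : Fin 7) : ∑ k, A a k * A a k = 4 := by
  have := congrFun (congrFun hA a) a
  simpa [Matrix.mul_apply, Matrix.one_apply] using this

lemma M_pat_gen (hA : A * Aᵀ = (4:ℝ) • 1) :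
    ∑ k, ∑ p, ∑ a, A a k * A a k * (A a p * A a p) = 112 := by
  rw [swap2 (fun k p a => A a k * A a k * (A a p * A a p))]
  have h : ∀ a : Fin 7, ∑ k, ∑ p, A a k * A a k * (A a p * A a p) = 16 := by
    intro a
    rw [← Finset.sum_mul_sum, row_norm hA a]; norm_num
  rw [Finset.sum_congr rfl (fun a _ => h a)]
  norm_num

lemma M_pat1 (hA : A * Aᵀ = (4:ℝ) • 1) : ∑ k, ∑ p, MM A (k,k,p,p) = 112 :=
  M_pat_gen hA

lemma M_pat2 (hA : A * Aᵀ = (4:ℝ) • 1) : ∑ k, ∑ l, MM A (k,l,k,l) = 112 := by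
  rw [← M_pat_gen hA]
  apply Finset.sum_congr rfl; intro k _
  apply Finset.sum_congr rfl; intro l _
  apply Finset.sum_congr rfl; intro a _
  ring

lemma M_pat3 (hA : A * Aᵀ = (4:ℝ) • 1) : ∑ k, ∑ l, MM A (k,l,l,k) = 112 := by
  rw [← M_pat_gen hA]
  apply Finset.sum_congr rfl; intro k _
  apply Finset.sum_congr rfl; intro l _
  apply Finset.sum_congr rfl; intro a _
  ring

lemma M_pat4 (hA : A * Aᵀ = (4:ℝ) • 1)
    (hEnt : ∀ i j, A i j = 0 ∨ A i j = 1 ∨ A i j = -1) :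
    ∑ k, MM A (k,k,k,k) = 28 := by
  unfold MM
  rw [Finset.sum_comm]
  have h : ∀ a : Fin 7, ∑ k, A a k * A a k * (A a k * A a k) = 4 := by
    intro a
    have h2 : ∀ k : Fin 7, A a k * A a k * (A a k * A a k) = A a k * A a k := by
      intro k; rcases hEnt a k with h|h|h <;> rw [h] <;> norm_num
    rw [Finset.sum_congr rfl (fun k _ => h2 k), row_norm hA a]
  rw [Finset.sum_congr rfl (fun a _ => h a)]
  norm_num

lemma inner_M_PP (hA : A * Aᵀ = (4:ℝ) • 1)
    (hEnt : ∀ i j, A i j = 0 ∨ A i j = 1 ∨ A i j = -1) :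
    ∑ t : F4, MM A t * PP t = 616 := by
  rw [inner_PP, M_pat1 hA, M_pat2 hA, M_pat3 hA, M_pat4 hA hEnt]
  norm_num

lemma four_same (hA : A * Aᵀ = (4:ℝ) • 1) :
    ∑ a, ∑ b, ((A * Aᵀ) a b)^4 = 1792 := by
  rw [hA]
  have h : ∀ a b : Fin 7, (((4:ℝ) • (1:Matrix (Fin 7) (Fin 7) ℝ)) a b)^4
      = if a = b then 256 else 0 := by
    intro a b
    simp only [Matrix.smul_apply, Matrix.one_apply, smul_eq_mul]
    split <;> norm_num
  simp only [h, Finset.sum_ite_eq, Finset.mem_univ, if_true]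
  norm_num

lemma four_cross {B L : Matrix (Fin 7) (Fin 7) ℝ}
    (hC : A * Bᵀ = (2:ℝ) • L) (hL : IsRealWeighing 4 L) :
    ∑ a, ∑ b, ((A * Bᵀ) a b)^4 = 448 := by
  rw [hC]
  have hLo : L * Lᵀ = (4:ℝ) • 1 := by
    have := hL.2; rwa [show (((4:ℕ)):ℝ) = (4:ℝ) by norm_num] at this
  have h : ∀ a b : Fin 7, (((2:ℝ) • L) a b)^4 = 16 * (L a b * L a b) := by
    intro a b
    simp only [Matrix.smul_apply, smul_eq_mul]
    rcases hL.1 a b with h|h|h <;> rw [h] <;> norm_num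
  simp only [h, ← Finset.mul_sum]
  have h2 : ∀ a : Fin 7, ∑ b, L a b * L a b = 4 := by
    intro a
    have := congrFun (congrFun hLo a) a
    simpa [Matrix.mul_apply, Matrix.one_apply] using this
  rw [Finset.sum_congr rfl (fun a _ => by rw [h2 a])]
  norm_num

end

end Stmt16Aux

open Stmt16Aux in
theorem stmt_16 {m : ℕ} (W : Fin m → Matrix (Fin 7) (Fin 7) ℝ)
    (hW : ∀ i, IsRealWeighing 4 (W i))
    (hUnb : ∀ i j, i ≠ j → RealUnbiased 4 (W i) (W j)) :
    m ≤ 8 := by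
  by_contra hm
  push_neg at hm
  have hm9 : (9:ℝ) ≤ (m:ℝ) := by exact_mod_cast hm
  have hsqrt : Real.sqrt ((4:ℕ):ℝ) = 2 := by
    rw [show (((4:ℕ)):ℝ) = (2:ℝ)^2 by norm_num, Real.sqrt_sq (by norm_num : (0:ℝ) ≤ 2)]
  have horth : ∀ i, W i * (W i)ᵀ = (4:ℝ) • 1 := fun i => by
    have := (hW i).2; rwa [show (((4:ℕ)):ℝ) = (4:ℝ) by norm_num] at this
  have key : ∀ i j : Fin m,
      ∑ t : F4, (MM (W i) t - PP t) * (MM (W j) t - PP t)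
        = if i = j then (1176:ℝ) else -168 := by
    intro i j
    have hexp : ∀ t : F4, (MM (W i) t - PP t) * (MM (W j) t - PP t)
        = MM (W i) t * MM (W j) t - MM (W i) t * PP t - MM (W j) t * PP t
          + PP t * PP t := by intro t; ring
    simp only [hexp]
    rw [Finset.sum_add_distrib, Finset.sum_sub_distrib, Finset.sum_sub_distrib,
      inner_MM, inner_M_PP (horth i) (hW i).1, inner_M_PP (horth j) (hW j).1,
      inner_PP_PP]
    by_cases hij : i = j
    · subst hij
      rw [four_same (horth i), if_pos rfl]
      norm_num
    · obtain ⟨L, hL, hC⟩ := hUnb i j hij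
      rw [hsqrt] at hC
      rw [four_cross hC hL, if_neg hij]
      norm_num
  have hT : (0:ℝ) ≤ ∑ t : F4, (∑ i, (MM (W i) t - PP t))^2 :=
    Finset.sum_nonneg (fun t _ => sq_nonneg _)
  have hT2 : ∑ t : F4, (∑ i, (MM (W i) t - PP t))^2
      = ∑ i, ∑ j, ∑ t : F4, (MM (W i) t - PP t) * (MM (W j) t - PP t) := by
    rw [← swap3]
    apply Finset.sum_congr rfl; intro t _
    rw [sq, Finset.sum_mul_sum]
  rw [hT2] at hT
  have hT3 : ∑ i, ∑ j, ∑ t : F4, (MM (W i) t - PP t) * (MM (W j) t - PP t)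
      = (m:ℝ) * (-168 * m + 1344) := by
    rw [Finset.sum_congr rfl (fun i _ => Finset.sum_congr rfl (fun j _ => key i j))]
    have h1 : ∀ i : Fin m, ∑ j, (if i = j then (1176:ℝ) else -168)
        = -168 * m + 1344 := by
      intro i
      have h2 : ∀ j : Fin m, (if i = j then (1176:ℝ) else -168)
          = -168 + (if i = j then (1344:ℝ) else 0) := by
        intro j; split <;> norm_num
      simp only [h2]
      rw [Finset.sum_add_distrib, Finset.sum_const, Finset.sum_ite_eq,
        Finset.card_univ, Fintype.card_fin]
      rw [if_pos (Finset.mem_univ i)]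
      ring
    rw [Finset.sum_congr rfl (fun i _ => h1 i), Finset.sum_const,
      Finset.card_univ, Fintype.card_fin]
    norm_num
    ring
  rw [hT3] at hT
  nlinarith [hT, hm9]
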